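/- arXiv:1910.14381 — 2 statements merged into one kernel-verified Lean document; each statement's English description precedes it below -/
import Mathlib

section
/- For any commutative regular expressions e and f such that f is a linear expression and ⟦e⟧ ⊆ ⟦f⟧, the inequality e ≤ f is derivable, i.e. e ∪ f ≡ f. -/
/-!
Modulo provable equality, expressions form a commutative Kleene algebra `FreeCKA α`, in which
every element is a finite sum of linear elements `lin u B = u · (∑ B)∗`: sums and products of
linear elements are again such sums, and `(u · s∗)∗ = 1 + u · (u + s)∗`. It therefore suffices
to derive `lin u A ≤ lin w B` from `⟦lin u A⟧ ⊆ ⟦lin w B⟧`.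

For a period `b ∈ A`, all the vectors `u + k • b` lie in `w + ⟨B⟩`; Dickson's lemma applied to
their coefficient vectors over `B` gives `N ≥ 1` with `N • b ∈ ⟨B⟩`, hence `(b ^ N)∗ ≤ (∑ B)∗`.
Since `b∗ ≤ (b ^ N)∗ · (b + 1) ^ (N - 1)`, we get `lin u A ≤ (∑ B)∗ · p` for the star-free
`p = u · ∏_{b ∈ A} (b + 1) ^ (N_b - 1)`. Every monomial of `p` lies in `⟦lin u A⟧ ⊆ ⟦lin w B⟧`,
and a monomial `v = w + c` with `c ∈ ⟨B⟩` is derivably below `w · (∑ B)∗`; so `p ≤ lin w B`, and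
`(∑ B)∗` is absorbed by the star of `lin w B`.
-/

namespace CKAnote

/-- Commutative regular expressions over an alphabet `α`. -/
inductive CRE (α : Type) where
  | zero : CRE α
  | one : CRE α
  | letter : α → CRE α
  | mul : CRE α → CRE α → CRE α
  | union : CRE α → CRE α → CRE α
  | star : CRE α → CRE α

variable {α : Type} [Fintype α] [DecidableEq α]

/-- Semantics of a commutative regular expression as a set of Parikh vectors. -/
def sem : CRE α → Set (α → ℕ)
  | .zero => ∅
  | .one => {0}
  | .letter a => {Pi.single a 1}
  | .mul e f => {w | ∃ u ∈ sem e, ∃ v ∈ sem f, w = u + v}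
  | .union e f => sem e ∪ sem f
  | .star e => ↑(AddSubmonoid.closure (sem e))

/-- Provable equality: the smallest congruence containing the axioms of
commutative Kleene algebra (where `e ≤ f` abbreviates `e ∪ f ≡ f`). -/
inductive CKA : CRE α → CRE α → Prop
  | refl (e : CRE α) : CKA e e
  | symm {e f : CRE α} : CKA e f → CKA f e
  | trans {e f g : CRE α} : CKA e f → CKA f g → CKA e g
  | mul_congr {e e' f f' : CRE α} : CKA e e' → CKA f f' → CKA (e.mul f) (e'.mul f')
  | union_congr {e e' f f' : CRE α} : CKA e e' → CKA f f' → CKA (e.union f) (e'.union f')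
  | star_congr {e e' : CRE α} : CKA e e' → CKA e.star e'.star
  | mul_assoc (e f g : CRE α) : CKA (e.mul (f.mul g)) ((e.mul f).mul g)
  | mul_comm (e f : CRE α) : CKA (e.mul f) (f.mul e)
  | one_mul (e : CRE α) : CKA (CRE.one.mul e) e
  | union_assoc (e f g : CRE α) : CKA (e.union (f.union g)) ((e.union f).union g)
  | union_comm (e f : CRE α) : CKA (e.union f) (f.union e)
  | union_idem (e : CRE α) : CKA (e.union e) e
  | zero_union (e : CRE α) : CKA (CRE.zero.union e) e
  | zero_mul (e : CRE α) : CKA (CRE.zero.mul e) CRE.zero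
  | left_distrib (e f g : CRE α) : CKA (e.mul (f.union g)) ((e.mul f).union (e.mul g))
  | star_unfold (e : CRE α) : CKA ((CRE.one.union (e.mul e.star)).union e.star) e.star
  | star_lfp {e f : CRE α} : CKA ((e.mul f).union f) f → CKA ((e.star.mul f).union f) f

/-- `e ≤ f`, i.e. `e ∪ f ≡ f`. -/
def leq (e f : CRE α) : Prop := CKA (e.union f) f

/-- `e^n`, the `n`-fold product of `e` with itself. -/
def pow (e : CRE α) : ℕ → CRE α
  | 0 => CRE.one
  | n + 1 => e.mul (pow e n)

/-- `e^{<n}`, i.e. `(e ∪ 1)^(n-1)` for `n > 0` and `0` for `n = 0`. -/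
def ltPow (e : CRE α) : ℕ → CRE α
  | 0 => CRE.zero
  | n + 1 => pow (e.union CRE.one) n

/-- Finite union of a list of expressions. -/
def unionList : List (CRE α) → CRE α
  | [] => CRE.zero
  | e :: l => e.union (unionList l)

/-- Finite product of a list of expressions. -/
def prodList : List (CRE α) → CRE α
  | [] => CRE.one
  | e :: l => e.mul (prodList l)

/-- `expr(u)`: the product over `a ∈ α` of `u a` copies of the letter `a`. -/
noncomputable def exprVec (u : α → ℕ) : CRE α :=
  prodList ((Finset.univ : Finset α).toList.map (fun a => pow (CRE.letter a) (u a)))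

/-- The union `⋃_{b ∈ B} expr(b)` for a finite set of Parikh vectors `B`. -/
noncomputable def unionVecs (B : Finset (α → ℕ)) : CRE α :=
  unionList (B.toList.map exprVec)

/-- The linear expression `expr(u) · (⋃_{b ∈ B} expr(b))*`. -/
noncomputable def linExpr (u : α → ℕ) (B : Finset (α → ℕ)) : CRE α :=
  (exprVec u).mul (unionVecs B).star

/-- A finite set of Parikh vectors is independent when every Parikh vector
admits at most one representation as an `ℕ`-linear combination of its elements. -/
def Independent (B : Finset (α → ℕ)) : Prop :=
  ∀ c d : (α → ℕ) → ℕ, (∑ b ∈ B, c b • b) = (∑ b ∈ B, d b • b) → ∀ b ∈ B, c b = d b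

/-- The semilinear expression associated to a list of linear data:
the finite union of the corresponding linear expressions. -/
noncomputable def semiLin (L : List ((α → ℕ) × Finset (α → ℕ))) : CRE α :=
  unionList (L.map (fun p => linExpr p.1 p.2))

/-- The dimension of a semilinear expression: the maximum of the dimensions
of its linear components. -/
def dimSL (L : List ((α → ℕ) × Finset (α → ℕ))) : ℕ :=
  (L.map (fun p => p.2.card)).foldr max 0

/-- Finitary (star-free) expressions. -/
def NoStar : CRE α → Prop
  | .zero => True
  | .one => True
  | .letter _ => True
  | .mul e f => NoStar e ∧ NoStar f
  | .union e f => NoStar e ∧ NoStar f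
  | .star _ => False

/-- Coordinatewise embedding of `ℕ^α` into `ℚ^α`. -/
def toQ (v : α → ℕ) : α → ℚ := fun a => (v a : ℚ)

end CKAnote

open Pointwise in
theorem AddSubmonoid.closure_add_subset {M : Type*} [AddMonoid M] {s t : Set M}
    (h : s + t ⊆ t) : (AddSubmonoid.closure s : Set M) + t ⊆ t := by
  rintro _ ⟨c, hc, y, hy, rfl⟩
  induction hc using AddSubmonoid.closure_induction generalizing y with
  | mem x hx => exact h (Set.add_mem_add hx hy)
  | zero => simpa
  | add x z _ _ ihx ihz =>
    show x + z + y ∈ t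
    rw [add_assoc]
    exact ihx _ (ihz y hy)

theorem AddSubmonoid.exists_nsmul_mem_closure_of_forall_add_nsmul {M : Type*}
    [AddCancelCommMonoid M] {s : Finset M} {u w b : M}
    (h : ∀ k : ℕ, ∃ c ∈ AddSubmonoid.closure (s : Set M), u + k • b = w + c) :
    ∃ n, 0 < n ∧ n • b ∈ AddSubmonoid.closure (s : Set M) := by
  choose c hc huc using h
  choose x hx using fun k => AddSubmonoid.mem_closure_finset'.1 (hc k)
  obtain ⟨m, n, hmn, hle⟩ := wellQuasiOrdered_le x
  refine ⟨n - m, Nat.sub_pos_of_lt hmn, ?_⟩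
  have hdiff : c n = c m + ∑ i : s, (x n i - x m i) • (i : M) := by
    rw [hx n, hx m, ← Finset.sum_add_distrib]
    refine Finset.sum_congr rfl fun i _ => ?_
    rw [← add_smul, Nat.add_sub_cancel' (hle i)]
  have hnm : (n - m) • b = ∑ i : s, (x n i - x m i) • (i : M) := by
    apply add_left_cancel (a := w + c m)
    calc w + c m + (n - m) • b = u + m • b + (n - m) • b := by rw [huc m]
      _ = w + c n := by rw [add_assoc, ← add_smul, Nat.add_sub_cancel' hmn.le, huc n]
      _ = w + c m + ∑ i : s, (x n i - x m i) • (i : M) := by rw [hdiff, add_assoc]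
  rw [hnm]
  exact AddSubmonoid.sum_mem _ fun i _ =>
    AddSubmonoid.nsmul_mem _ (AddSubmonoid.subset_closure i.2) _

section IdemSemiring

variable {K ι : Type*} [IdemSemiring K] [DecidableEq ι]

theorem Finset.sum_insert_idem (s : Finset ι) (f : ι → K) (i : ι) :
    ∑ j ∈ insert i s, f j = f i + ∑ j ∈ s, f j := by
  by_cases hi : i ∈ s
  · rw [Finset.insert_eq_of_mem hi, eq_comm, add_eq_right_iff_le]
    exact Finset.single_le_sum (f := f) (fun _ _ => zero_le) hi
  · exact Finset.sum_insert hi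

theorem Finset.sum_union_idem (s t : Finset ι) (f : ι → K) :
    ∑ j ∈ s ∪ t, f j = ∑ j ∈ s, f j + ∑ j ∈ t, f j := by
  induction s using Finset.induction_on with
  | empty => simp
  | insert i s _ ih =>
    rw [Finset.insert_union, Finset.sum_insert_idem, Finset.sum_insert_idem, ih, add_assoc]

end IdemSemiring

open Computability

section KleeneAlgebra

variable {K : Type*} [KleeneAlgebra K]

theorem kstar_le_kstar_of_le {a b : K} (h : a ≤ b∗) : a∗ ≤ b∗ :=
  (kstar_mono h).trans (kstar_idem b).le

theorem pow_le_kstar_of_le {a b : K} (h : a ≤ b∗) (n : ℕ) : a ^ n ≤ b∗ :=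
  calc a ^ n ≤ b∗ ^ n := pow_le_pow_left' h n
    _ ≤ b∗∗ := pow_le_kstar
    _ = b∗ := kstar_idem b

end KleeneAlgebra

section CommKleeneAlgebra

open scoped IsMulCommutative

variable {K : Type*} [KleeneAlgebra K] [IsMulCommutative K]

theorem kstar_add (a b : K) : (a + b)∗ = a∗ * b∗ := by
  refine le_antisymm (kstar_le_of_mul_le_right (one_le_mul one_le_kstar one_le_kstar) ?_) ?_
  · calc (a + b) * (a∗ * b∗) = a * a∗ * b∗ + a∗ * (b * b∗) := by ring
      _ ≤ a∗ * b∗ :=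
          add_le (mul_le_mul_left mul_kstar_le_kstar _) (mul_le_mul_right mul_kstar_le_kstar _)
  · calc a∗ * b∗ ≤ (a + b)∗ * (a + b)∗ :=
          mul_le_mul' (kstar_mono le_self_add) (kstar_mono le_add_self)
      _ = (a + b)∗ := kstar_mul_kstar _

theorem kstar_sum {ι : Type*} (s : Finset ι) (f : ι → K) :
    (∑ i ∈ s, f i)∗ = ∏ i ∈ s, (f i)∗ := by
  classical
  induction s using Finset.induction_on with
  | empty => simp
  | insert i s hi ih => rw [Finset.sum_insert hi, Finset.prod_insert hi, kstar_add, ih]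

theorem kstar_mul_kstar_eq_one_add (a b : K) : (a * b∗)∗ = 1 + a * (a + b)∗ := by
  refine le_antisymm (kstar_le_of_mul_le_right le_self_add ?_) (add_le one_le_kstar ?_)
  · calc a * b∗ * (1 + a * (a + b)∗) = a * (b∗ + b∗ * (a * (a + b)∗)) := by ring
      _ ≤ a * ((a + b)∗ + (a + b)∗ * (a + b)∗) := by
          have hb : b∗ ≤ (a + b)∗ := kstar_mono le_add_self
          have ha : a * (a + b)∗ ≤ (a + b)∗ :=
            (mul_le_mul_left le_self_add _).trans mul_kstar_le_kstar
          gcongr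
      _ ≤ 1 + a * (a + b)∗ := by rw [kstar_mul_kstar, add_idem]; exact le_add_self
  · calc a * (a + b)∗ = a∗ * (a * b∗) := by rw [kstar_add]; ring
      _ ≤ a∗ * (a * b∗)∗ := by gcongr; exact le_kstar
      _ ≤ (a * b∗)∗ := kstar_mul_le_self <|
          (mul_le_mul_left (le_mul_of_one_le_right' one_le_kstar) _).trans mul_kstar_le_kstar

theorem add_one_pow_eq_sum (a : K) (n : ℕ) :
    (a + 1) ^ n = ∑ j ∈ Finset.range (n + 1), a ^ j := by
  rw [add_pow]
  refine Finset.sum_congr rfl fun j hj => ?_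
  rw [one_pow, mul_one, natCast_eq_one (Nat.choose_pos (Finset.mem_range_succ_iff.1 hj)).ne',
    mul_one]

theorem add_one_pow_succ (a : K) (n : ℕ) : (a + 1) ^ (n + 1) = (a + 1) ^ n + a ^ (n + 1) := by
  rw [add_one_pow_eq_sum, add_one_pow_eq_sum, Finset.sum_range_succ]

theorem kstar_le_kstar_pow_mul (a : K) (n : ℕ) : a∗ ≤ (a ^ (n + 1))∗ * (a + 1) ^ n := by
  have h1 : 1 ≤ (a + 1) ^ n := one_le_pow_of_one_le' le_add_self n
  refine kstar_le_of_mul_le_right (one_le_mul one_le_kstar h1) ?_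
  calc a * ((a ^ (n + 1))∗ * (a + 1) ^ n) = (a ^ (n + 1))∗ * (a * (a + 1) ^ n) := by ring
    _ ≤ (a ^ (n + 1))∗ * ((a + 1) ^ n + a ^ (n + 1)) := by
        gcongr
        rw [← add_one_pow_succ, pow_succ']
        exact mul_le_mul_left le_self_add _
    _ = (a ^ (n + 1))∗ * (a + 1) ^ n + (a ^ (n + 1))∗ * a ^ (n + 1) := mul_add _ _ _
    _ ≤ (a ^ (n + 1))∗ * (a + 1) ^ n :=
        add_le le_rfl (kstar_mul_le_kstar.trans (le_mul_of_one_le_right' h1))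

theorem prod_le_kstar {ι : Type*} {s : Finset ι} {f : ι → K} {b : K} (h : ∀ i ∈ s, f i ≤ b∗) :
    ∏ i ∈ s, f i ≤ b∗ := by
  classical
  induction s using Finset.induction_on with
  | empty => exact one_le_kstar
  | insert i s hi ih =>
    rw [Finset.prod_insert hi, ← kstar_mul_kstar b]
    exact mul_le_mul' (h i (Finset.mem_insert_self i s))
      (ih fun j hj => h j (Finset.mem_insert_of_mem hj))

end CommKleeneAlgebra

namespace CKAnote

open Pointwise

variable {α : Type}

section Soundness

variable [DecidableEq α]

theorem sem_mul (e f : CRE α) : sem (e.mul f) = sem e + sem f := by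
  ext w
  exact ⟨fun ⟨u, hu, v, hv, h⟩ => ⟨u, hu, v, hv, h.symm⟩,
    fun ⟨u, hu, v, hv, h⟩ => ⟨u, hu, v, hv, h.symm⟩⟩

theorem sem_eq_of_cka {e f : CRE α} (h : CKA e f) : sem e = sem f := by
  induction h with
  | refl => rfl
  | symm _ ih => exact ih.symm
  | trans _ _ ih₁ ih₂ => exact ih₁.trans ih₂
  | mul_congr _ _ ih₁ ih₂ => rw [sem_mul, sem_mul, ih₁, ih₂]
  | union_congr _ _ ih₁ ih₂ => simp only [sem, ih₁, ih₂]
  | star_congr _ ih => simp only [sem, ih]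
  | mul_assoc => simp only [sem_mul, add_assoc]
  | mul_comm => rw [sem_mul, sem_mul, add_comm]
  | one_mul => rw [sem_mul, sem, Set.singleton_zero, zero_add]
  | union_assoc => exact (Set.union_assoc ..).symm
  | union_comm => exact Set.union_comm ..
  | union_idem => exact Set.union_self _
  | zero_union => exact Set.empty_union _
  | zero_mul => rw [sem_mul, sem, Set.empty_add]
  | left_distrib e f g =>
    change sem (e.mul (f.union g)) = sem (e.mul f) ∪ sem (e.mul g)
    rw [sem_mul, sem_mul, sem_mul]
    exact Set.add_union
  | star_unfold e =>
    refine Set.union_eq_right.2 (Set.union_subset ?_ ?_)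
    · exact Set.singleton_subset_iff.2 (AddSubmonoid.zero_mem _)
    · rw [sem_mul]
      rintro _ ⟨x, hx, y, hy, rfl⟩
      exact add_mem (AddSubmonoid.subset_closure hx) hy
  | @star_lfp e f _ ih =>
    change sem (e.mul f) ∪ sem f = sem f at ih
    change sem (e.star.mul f) ∪ sem f = sem f
    rw [sem_mul] at ih ⊢
    exact Set.union_eq_right.2 (AddSubmonoid.closure_add_subset (Set.union_eq_right.1 ih))

end Soundness

def ckaSetoid (α : Type) : Setoid (CRE α) := ⟨CKA, ⟨CKA.refl, CKA.symm, CKA.trans⟩⟩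

def FreeCKA (α : Type) : Type := Quotient (ckaSetoid α)

namespace FreeCKA

def mk : CRE α → FreeCKA α := Quotient.mk _

instance : Zero (FreeCKA α) := ⟨mk .zero⟩
instance : One (FreeCKA α) := ⟨mk .one⟩
instance : Add (FreeCKA α) := ⟨Quotient.map₂ CRE.union fun _ _ h _ _ h' => CKA.union_congr h h'⟩
instance : Mul (FreeCKA α) := ⟨Quotient.map₂ CRE.mul fun _ _ h _ _ h' => CKA.mul_congr h h'⟩
instance : KStar (FreeCKA α) := ⟨Quotient.map CRE.star fun _ _ => CKA.star_congr⟩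

instance : CommSemiring (FreeCKA α) where
  add_assoc := by rintro ⟨a⟩ ⟨b⟩ ⟨c⟩; exact Quot.sound (CKA.union_assoc a b c).symm
  zero_add := by rintro ⟨a⟩; exact Quot.sound (CKA.zero_union a)
  add_zero := by rintro ⟨a⟩; exact Quot.sound ((CKA.union_comm a _).trans (CKA.zero_union a))
  add_comm := by rintro ⟨a⟩ ⟨b⟩; exact Quot.sound (CKA.union_comm a b)
  mul_assoc := by rintro ⟨a⟩ ⟨b⟩ ⟨c⟩; exact Quot.sound (CKA.mul_assoc a b c).symm
  one_mul := by rintro ⟨a⟩; exact Quot.sound (CKA.one_mul a)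
  mul_one := by rintro ⟨a⟩; exact Quot.sound ((CKA.mul_comm a _).trans (CKA.one_mul a))
  zero_mul := by rintro ⟨a⟩; exact Quot.sound (CKA.zero_mul a)
  mul_zero := by rintro ⟨a⟩; exact Quot.sound ((CKA.mul_comm a _).trans (CKA.zero_mul a))
  left_distrib := by rintro ⟨a⟩ ⟨b⟩ ⟨c⟩; exact Quot.sound (CKA.left_distrib a b c)
  right_distrib := by
    rintro ⟨a⟩ ⟨b⟩ ⟨c⟩
    exact Quot.sound ((CKA.mul_comm _ c).trans ((CKA.left_distrib c a b).trans
      (CKA.union_congr (CKA.mul_comm c a) (CKA.mul_comm c b))))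
  mul_comm := by rintro ⟨a⟩ ⟨b⟩; exact Quot.sound (CKA.mul_comm a b)
  nsmul := nsmulRec

instance : IdemSemiring (FreeCKA α) :=
  IdemSemiring.ofSemiring fun x => by rcases x with ⟨a⟩; exact Quot.sound (CKA.union_idem a)

-- `IdemSemiring.ofSemiring` defines `x ≤ y` as `x + y = y`, which is `leq` on representatives.
theorem mk_le_mk {e f : CRE α} : mk e ≤ mk f ↔ leq e f := Quotient.eq

theorem one_add_mul_kstar_le (x : FreeCKA α) : 1 + x * x∗ ≤ x∗ := by
  rcases x with ⟨a⟩; exact Quot.sound (CKA.star_unfold a)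

theorem kstar_mul_le_of_mul_le {x y : FreeCKA α} (h : x * y ≤ y) : x∗ * y ≤ y := by
  rcases x with ⟨a⟩; rcases y with ⟨b⟩; exact Quot.sound (CKA.star_lfp (Quotient.exact h))

instance : KleeneAlgebra (FreeCKA α) where
  one_le_kstar x := le_self_add.trans (one_add_mul_kstar_le x)
  mul_kstar_le_kstar x := le_add_self.trans (one_add_mul_kstar_le x)
  kstar_mul_le_kstar x := mul_comm x x∗ ▸ le_add_self.trans (one_add_mul_kstar_le x)
  mul_kstar_le_self x y h := by
    rw [mul_comm] at h ⊢; exact kstar_mul_le_of_mul_le h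
  kstar_mul_le_self _ _ := kstar_mul_le_of_mul_le

theorem mk_pow (e : CRE α) (n : ℕ) : mk (pow e n) = mk e ^ n := by
  induction n with
  | zero => exact (pow_zero _).symm
  | succ n ih => rw [pow_succ', ← ih]; rfl

theorem mk_prodList (l : List (CRE α)) : mk (prodList l) = (l.map mk).prod := by
  induction l with
  | nil => rfl
  | cons e l ih => rw [List.map_cons, List.prod_cons, ← ih]; rfl

theorem mk_unionList (l : List (CRE α)) : mk (unionList l) = (l.map mk).sum := by
  induction l with
  | nil => rfl
  | cons e l ih => rw [List.map_cons, List.sum_cons, ← ih]; rfl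

section Monomials

variable [Fintype α]

def monomial (u : α → ℕ) : FreeCKA α := ∏ a, mk (.letter a) ^ u a

theorem monomial_zero : monomial (0 : α → ℕ) = 1 := by simp [monomial]

theorem monomial_add (u v : α → ℕ) : monomial (u + v) = monomial u * monomial v := by
  simp only [monomial, Pi.add_apply, pow_add, Finset.prod_mul_distrib]

theorem monomial_nsmul (n : ℕ) (u : α → ℕ) : monomial (n • u) = monomial u ^ n := by
  simp only [monomial, Pi.smul_apply, smul_eq_mul, pow_mul', Finset.prod_pow]

theorem monomial_single [DecidableEq α] (a : α) : monomial (Pi.single a 1) = mk (.letter a) := by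
  simp [monomial, Pi.single_apply]

theorem mk_exprVec (u : α → ℕ) : mk (exprVec u) = monomial u := by
  simp [exprVec, mk_prodList, mk_pow, monomial, Function.comp_def]

def lin (u : α → ℕ) (B : Finset (α → ℕ)) : FreeCKA α := monomial u * (∑ b ∈ B, monomial b)∗

theorem mk_linExpr (u : α → ℕ) (B : Finset (α → ℕ)) : mk (linExpr u B) = lin u B := by
  have hmk : mk ∘ exprVec = (monomial : (α → ℕ) → FreeCKA α) := funext mk_exprVec
  change mk (exprVec u) * (mk (unionList (B.toList.map exprVec)))∗ = _
  rw [mk_exprVec, mk_unionList, List.map_map, hmk, Finset.sum_map_toList, lin]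

theorem lin_empty (u : α → ℕ) : lin u ∅ = monomial u := by simp [lin]

theorem lin_mul_lin (u w : α → ℕ) (A B : Finset (α → ℕ)) :
    lin u A * lin w B = lin (u + w) (A ∪ B) := by
  rw [lin, lin, lin, monomial_add, Finset.sum_union_idem, kstar_add]; ring

theorem lin_kstar (u : α → ℕ) (B : Finset (α → ℕ)) : (lin u B)∗ = 1 + lin u (insert u B) := by
  rw [lin, kstar_mul_kstar_eq_one_add, lin, Finset.sum_insert_idem]

def monomials : Submonoid (FreeCKA α) where
  carrier := Set.range monomial
  mul_mem' := by rintro _ _ ⟨u, rfl⟩ ⟨v, rfl⟩; exact ⟨u + v, monomial_add u v⟩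
  one_mem' := ⟨0, monomial_zero⟩

def linears : Submonoid (FreeCKA α) where
  carrier := {x | ∃ u B, lin u B = x}
  mul_mem' := by
    rintro _ _ ⟨u, A, rfl⟩ ⟨w, B, rfl⟩; exact ⟨u + w, A ∪ B, (lin_mul_lin u w A B).symm⟩
  one_mem' := ⟨0, ∅, by rw [lin_empty, monomial_zero]⟩

theorem kstar_mem_subsemiringClosure_linears {x : FreeCKA α}
    (hx : x ∈ linears.subsemiringClosure) : x∗ ∈ linears.subsemiringClosure := by
  rw [Submonoid.subsemiringClosure_mem] at hx
  induction hx using AddSubmonoid.closure_induction with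
  | mem _ hx =>
    obtain ⟨u, B, rfl⟩ := hx
    rw [lin_kstar]
    exact add_mem (one_mem _) ((Submonoid.subsemiringClosure_mem _).2
      (AddSubmonoid.subset_closure ⟨u, insert u B, rfl⟩))
  | zero => rw [kstar_zero]; exact one_mem _
  | add x y _ _ hx hy => rw [kstar_add]; exact mul_mem hx hy

theorem mk_mem_subsemiringClosure_linears [DecidableEq α] (e : CRE α) :
    mk e ∈ linears.subsemiringClosure := by
  induction e with
  | zero => exact zero_mem _
  | one => exact one_mem _
  | letter a =>
    rw [← monomial_single, ← lin_empty]
    exact (Submonoid.subsemiringClosure_mem _).2 (AddSubmonoid.subset_closure ⟨_, _, rfl⟩)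
  | mul e f he hf => exact mul_mem he hf
  | union e f he hf => exact add_mem he hf
  | star e he => exact kstar_mem_subsemiringClosure_linears he

theorem monomial_le_kstar_of_mem_closure {B : Finset (α → ℕ)} {c : α → ℕ}
    (hc : c ∈ AddSubmonoid.closure (B : Set (α → ℕ))) :
    monomial c ≤ (∑ b ∈ B, monomial b)∗ := by
  induction hc using AddSubmonoid.closure_induction with
  | mem b hb => exact (Finset.single_le_sum (fun _ _ => zero_le) hb).trans le_kstar
  | zero => rw [monomial_zero]; exact one_le_kstar
  | add c d _ _ hc hd => rw [monomial_add, ← kstar_mul_kstar]; exact mul_le_mul' hc hd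

end Monomials

section Semantics

variable [DecidableEq α]

def sem : FreeCKA α → Set (α → ℕ) := Quotient.lift CKAnote.sem fun _ _ => sem_eq_of_cka

theorem sem_mk (e : CRE α) : sem (mk e) = CKAnote.sem e := rfl

theorem sem_add (x y : FreeCKA α) : sem (x + y) = sem x ∪ sem y := by
  rcases x with ⟨a⟩; rcases y with ⟨b⟩; rfl

theorem sem_mul (x y : FreeCKA α) : sem (x * y) = sem x + sem y := by
  rcases x with ⟨a⟩; rcases y with ⟨b⟩; exact CKAnote.sem_mul a b

theorem sem_kstar (x : FreeCKA α) : sem x∗ = AddSubmonoid.closure (sem x) := by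
  rcases x with ⟨a⟩; rfl

theorem sem_mono {x y : FreeCKA α} (h : x ≤ y) : sem x ⊆ sem y := by
  rw [← add_eq_right_iff_le.2 h, sem_add]; exact Set.subset_union_left

theorem sem_pow (x : FreeCKA α) (n : ℕ) : sem (x ^ n) = n • sem x := by
  induction n with
  | zero => exact Set.singleton_zero
  | succ n ih => rw [pow_succ, sem_mul, ih, succ_nsmul]

theorem sem_prod {ι : Type*} (s : Finset ι) (f : ι → FreeCKA α) :
    sem (∏ i ∈ s, f i) = ∑ i ∈ s, sem (f i) := by
  classical
  induction s using Finset.induction_on with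
  | empty => exact Set.singleton_zero
  | insert i s hi ih => rw [Finset.prod_insert hi, Finset.sum_insert hi, sem_mul, ih]

theorem le_of_sem_subset_of_mem_subsemiringClosure {M : Submonoid (FreeCKA α)} {y : FreeCKA α}
    (hM : ∀ m ∈ M, sem m ⊆ sem y → m ≤ y) {x : FreeCKA α} (hx : x ∈ M.subsemiringClosure)
    (h : sem x ⊆ sem y) : x ≤ y := by
  rw [Submonoid.subsemiringClosure_mem] at hx
  induction hx using AddSubmonoid.closure_induction with
  | mem m hm => exact hM m hm h
  | zero => exact zero_le
  | add x z _ _ ihx ihz =>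
    rw [sem_add, Set.union_subset_iff] at h
    exact add_le (ihx h.1) (ihz h.2)

variable [Fintype α]

theorem sem_monomial (u : α → ℕ) : sem (monomial u) = {u} := by
  simp only [monomial, sem_prod, sem_pow, sem_mk, CKAnote.sem, Set.nsmul_singleton,
    Set.finsetSum_singleton]
  congr
  ext a
  simp [Pi.single_apply]

theorem sem_sum_monomial (B : Finset (α → ℕ)) : sem (∑ b ∈ B, monomial b) = B := by
  induction B using Finset.induction_on with
  | empty => rw [Finset.sum_empty, Finset.coe_empty]; rfl
  | insert b B hb ih =>
    rw [Finset.sum_insert hb, sem_add, sem_monomial, ih, Finset.coe_insert, Set.insert_eq]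

theorem mem_sem_lin {u w : α → ℕ} {B : Finset (α → ℕ)} :
    w ∈ sem (lin u B) ↔ ∃ c ∈ AddSubmonoid.closure (B : Set (α → ℕ)), u + c = w := by
  rw [lin, sem_mul, sem_monomial, sem_kstar, sem_sum_monomial, Set.singleton_add]
  rfl

theorem le_lin_of_mem_subsemiringClosure_monomials {x : FreeCKA α} {w : α → ℕ}
    {B : Finset (α → ℕ)} (hx : x ∈ monomials.subsemiringClosure) (h : sem x ⊆ sem (lin w B)) :
    x ≤ lin w B := by
  refine le_of_sem_subset_of_mem_subsemiringClosure ?_ hx h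
  rintro _ ⟨v, rfl⟩ hv
  obtain ⟨c, hc, rfl⟩ := mem_sem_lin.1 (hv (by rw [sem_monomial]; rfl))
  rw [monomial_add, lin]
  exact mul_le_mul_right (monomial_le_kstar_of_mem_closure hc) _

theorem exists_pow_succ_le_kstar_of_sem_subset {u w b : α → ℕ} {A B : Finset (α → ℕ)}
    (h : sem (lin u A) ⊆ sem (lin w B)) (hb : b ∈ A) :
    ∃ k, monomial b ^ (k + 1) ≤ (∑ b ∈ B, monomial b)∗ := by
  obtain ⟨n, hn, hnb⟩ := AddSubmonoid.exists_nsmul_mem_closure_of_forall_add_nsmul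
    (u := u) (w := w) (b := b) fun k => by
      obtain ⟨c, hc, hw⟩ := mem_sem_lin.1 (h (mem_sem_lin.2
        ⟨k • b, AddSubmonoid.nsmul_mem _ (AddSubmonoid.subset_closure hb) k, rfl⟩))
      exact ⟨c, hc, hw.symm⟩
  refine ⟨n - 1, ?_⟩
  rw [Nat.sub_add_cancel hn, ← monomial_nsmul]
  exact monomial_le_kstar_of_mem_closure hnb

theorem lin_le_lin_of_sem_subset {u w : α → ℕ} {A B : Finset (α → ℕ)}
    (h : sem (lin u A) ⊆ sem (lin w B)) : lin u A ≤ lin w B := by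
  set S := ∑ b ∈ B, monomial b with hS
  choose! k hk using fun b (hb : b ∈ A) => exists_pow_succ_le_kstar_of_sem_subset h hb
  set p := monomial u * ∏ b ∈ A, (monomial b + 1) ^ k b
  have hmon (v : α → ℕ) : monomial v ∈ monomials.subsemiringClosure :=
    (Submonoid.subsemiringClosure_mem _).2 (AddSubmonoid.subset_closure ⟨v, rfl⟩)
  have hp : p ∈ monomials.subsemiringClosure :=
    mul_mem (hmon u) (prod_mem fun b _ => pow_mem (add_mem (hmon b) (one_mem _)) _)
  have hpA : p ≤ lin u A := mul_le_mul_right (prod_le_kstar fun b hb => pow_le_kstar_of_le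
    (add_le ((Finset.single_le_sum (fun _ _ => zero_le) hb).trans le_kstar) one_le_kstar) _) _
  have hpB : p ≤ lin w B :=
    le_lin_of_mem_subsemiringClosure_monomials hp ((sem_mono hpA).trans h)
  calc lin u A = monomial u * ∏ b ∈ A, (monomial b)∗ := by rw [lin, kstar_sum]
    _ ≤ monomial u * ∏ b ∈ A, (monomial b ^ (k b + 1))∗ * (monomial b + 1) ^ k b := by
        gcongr with b hb
        exact kstar_le_kstar_pow_mul _ _
    _ = (∏ b ∈ A, (monomial b ^ (k b + 1))∗) * p := by rw [Finset.prod_mul_distrib]; ring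
    _ ≤ S∗ * lin w B :=
        mul_le_mul' (prod_le_kstar fun b hb => kstar_le_kstar_of_le (hk b hb)) hpB
    _ = lin w B := by rw [lin, ← hS, mul_left_comm, kstar_mul_kstar]

end Semantics

end FreeCKA

variable [Fintype α] [DecidableEq α]

/-- If `f` is linear and `⟦e⟧ ⊆ ⟦f⟧`, then `e ≤ f` is derivable. -/
theorem corBaseInclusion (e : CRE α) (v : α → ℕ) (B : Finset (α → ℕ))
    (h : sem e ⊆ sem (linExpr v B)) :
    leq e (linExpr v B) := by
  rw [← FreeCKA.mk_le_mk, FreeCKA.mk_linExpr]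
  refine FreeCKA.le_of_sem_subset_of_mem_subsemiringClosure ?_
    (FreeCKA.mk_mem_subsemiringClosure_linears e) ?_
  · rintro _ ⟨u, A, rfl⟩ hA
    exact FreeCKA.lin_le_lin_of_sem_subset hA
  · rwa [FreeCKA.sem_mk, ← FreeCKA.mk_linExpr]

end CKAnote
end

section
/- For every finitary commutative regular expression e (one containing no star) and every commutative regular expression f, if ⟦e⟧ ⊆ ⟦f⟧ then e ≤ f is derivable, i.e. e ∪ f ≡ f. -/
namespace CKAnote

variable {α : Type}

theorem leq_of_cka {e f : CRE α} (h : CKA e f) : leq e f :=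
  (CKA.union_congr h (CKA.refl f)).trans (CKA.union_idem f)

theorem leq_refl (e : CRE α) : leq e e := CKA.union_idem e

theorem leq_trans {e f g : CRE α} (hef : leq e f) (hfg : leq f g) : leq e g :=
  (CKA.union_congr (CKA.refl e) hfg.symm).trans
    ((CKA.union_assoc e f g).trans ((CKA.union_congr hef (CKA.refl g)).trans hfg))

theorem zero_leq (e : CRE α) : leq CRE.zero e := CKA.zero_union e

theorem leq_union_left (e f : CRE α) : leq e (e.union f) :=
  (CKA.union_assoc e e f).trans (CKA.union_congr (CKA.union_idem e) (CKA.refl f))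

theorem leq_union_right (e f : CRE α) : leq f (e.union f) :=
  leq_trans (leq_union_left f e) (leq_of_cka (CKA.union_comm f e))

theorem union_leq {e f g : CRE α} (heg : leq e g) (hfg : leq f g) : leq (e.union f) g :=
  (CKA.union_assoc e f g).symm.trans ((CKA.union_congr (CKA.refl e) hfg).trans heg)

theorem cka_mul_one (e : CRE α) : CKA (e.mul CRE.one) e :=
  (CKA.mul_comm e CRE.one).trans (CKA.one_mul e)

theorem cka_union_mul (e f g : CRE α) :
    CKA ((e.union f).mul g) ((e.mul g).union (f.mul g)) :=
  (CKA.mul_comm _ g).trans ((CKA.left_distrib g e f).trans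
    (CKA.union_congr (CKA.mul_comm g e) (CKA.mul_comm g f)))

theorem cka_mul_mul_mul_comm (e f g h : CRE α) :
    CKA ((e.mul f).mul (g.mul h)) ((e.mul g).mul (f.mul h)) := by
  refine (CKA.mul_assoc e f (g.mul h)).symm.trans ?_
  refine (CKA.mul_congr (CKA.refl e) ?_).trans (CKA.mul_assoc e g (f.mul h))
  exact ((CKA.mul_assoc f g h).trans (CKA.mul_congr (CKA.mul_comm f g) (CKA.refl h))).trans
    (CKA.mul_assoc g f h).symm

theorem mul_leq_mul_left (g : CRE α) {e f : CRE α} (hef : leq e f) : leq (g.mul e) (g.mul f) :=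
  (CKA.left_distrib g e f).symm.trans (CKA.mul_congr (CKA.refl g) hef)

theorem mul_leq_mul {e e' f f' : CRE α} (he : leq e e') (hf : leq f f') :
    leq (e.mul f) (e'.mul f') :=
  leq_trans (mul_leq_mul_left e hf) <| leq_trans (leq_of_cka (CKA.mul_comm e f')) <|
    leq_trans (mul_leq_mul_left f' he) (leq_of_cka (CKA.mul_comm f' e'))

theorem one_leq_star (e : CRE α) : leq CRE.one e.star :=
  leq_trans (leq_union_left CRE.one (e.mul e.star)) (CKA.star_unfold e)

theorem mul_star_leq (e : CRE α) : leq (e.mul e.star) e.star :=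
  leq_trans (leq_union_right CRE.one (e.mul e.star)) (CKA.star_unfold e)

theorem leq_star (e : CRE α) : leq e e.star :=
  leq_trans (leq_of_cka (cka_mul_one e).symm)
    (leq_trans (mul_leq_mul_left e (one_leq_star e)) (mul_star_leq e))

theorem star_mul_star_leq (e : CRE α) : leq (e.star.mul e.star) e.star :=
  CKA.star_lfp (mul_star_leq e)

theorem unionList_leq {L : List (CRE α)} {g : CRE α} (h : ∀ x ∈ L, leq x g) :
    leq (unionList L) g := by
  induction L with
  | nil => exact zero_leq g
  | cons x L ih => exact union_leq (h x (by simp)) (ih fun y hy => h y (by simp [hy]))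

theorem leq_unionList {L : List (CRE α)} {x : CRE α} (hx : x ∈ L) : leq x (unionList L) := by
  induction L with
  | nil => cases hx
  | cons y L ih =>
    rcases List.mem_cons.1 hx with rfl | hx
    · exact leq_union_left x (unionList L)
    · exact leq_trans (ih hx) (leq_union_right y (unionList L))

theorem unionList_leq_unionList {L M : List (CRE α)} (h : L ⊆ M) :
    leq (unionList L) (unionList M) :=
  unionList_leq fun _ hx => leq_unionList (h hx)

theorem unionList_mul_leq {L : List (CRE α)} {g h : CRE α} (hL : ∀ x ∈ L, leq (x.mul g) h) :
    leq ((unionList L).mul g) h := by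
  induction L with
  | nil => exact leq_trans (leq_of_cka (CKA.zero_mul g)) (zero_leq h)
  | cons x L ih =>
    exact leq_trans (leq_of_cka (cka_union_mul x (unionList L) g))
      (union_leq (hL x (by simp)) (ih fun y hy => hL y (by simp [hy])))

theorem unionList_mul_unionList_leq {L M : List (CRE α)} {h : CRE α}
    (hLM : ∀ x ∈ L, ∀ y ∈ M, leq (x.mul y) h) : leq ((unionList L).mul (unionList M)) h :=
  unionList_mul_leq fun x hx =>
    leq_trans (leq_of_cka (CKA.mul_comm x _)) <| unionList_mul_leq fun y hy =>
      leq_trans (leq_of_cka (CKA.mul_comm y x)) (hLM x hx y hy)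

theorem cka_prodList_map_congr {β : Type} {l : List β} {x y : β → CRE α}
    (h : ∀ b ∈ l, CKA (x b) (y b)) : CKA (prodList (l.map x)) (prodList (l.map y)) := by
  induction l with
  | nil => exact CKA.refl _
  | cons b l ih => exact CKA.mul_congr (h b (by simp)) (ih fun c hc => h c (by simp [hc]))

theorem cka_prodList_map_one {β : Type} {l : List β} {x : β → CRE α}
    (h : ∀ b ∈ l, CKA (x b) CRE.one) : CKA (prodList (l.map x)) CRE.one := by
  induction l with
  | nil => exact CKA.refl _
  | cons b l ih =>
    exact (CKA.mul_congr (h b (by simp)) (ih fun c hc => h c (by simp [hc]))).trans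
      (CKA.one_mul CRE.one)

theorem cka_prodList_map_mul {β : Type} (l : List β) (x y : β → CRE α) :
    CKA (prodList (l.map fun b => (x b).mul (y b)))
      ((prodList (l.map x)).mul (prodList (l.map y))) := by
  induction l with
  | nil => exact (CKA.one_mul CRE.one).symm
  | cons b l ih =>
    exact (CKA.mul_congr (CKA.refl _) ih).trans (cka_mul_mul_mul_comm _ _ _ _)

theorem cka_pow_add (e : CRE α) (m n : ℕ) : CKA (pow e (m + n)) ((pow e m).mul (pow e n)) := by
  induction m with
  | zero => simpa [pow] using (CKA.one_mul (pow e n)).symm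
  | succ m ih =>
    rw [Nat.add_right_comm]
    exact (CKA.mul_congr (CKA.refl e) ih).trans (CKA.mul_assoc e (pow e m) (pow e n))

theorem cka_prodList_map_pow_single [DecidableEq α] {a : α} {l : List α} (ha : a ∈ l)
    (hl : l.Nodup) :
    CKA (prodList (l.map fun b => pow (CRE.letter b) ((Pi.single a 1 : α → ℕ) b)))
      (CRE.letter a) := by
  induction l with
  | nil => cases ha
  | cons b l ih =>
    obtain ⟨hbl, hl⟩ := List.nodup_cons.1 hl
    rcases List.mem_cons.1 ha with rfl | ha
    · have hrest : CKA (prodList (l.map fun c => pow (CRE.letter c) ((Pi.single a 1 : α → ℕ) c)))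
          CRE.one := cka_prodList_map_one fun c hc => by
        rw [Pi.single_eq_of_ne (ne_of_mem_of_not_mem hc hbl)]
        exact CKA.refl _
      simp only [List.map_cons, prodList, Pi.single_eq_same, pow]
      exact (CKA.mul_congr (CKA.refl _) hrest).trans ((cka_mul_one _).trans (cka_mul_one _))
    · simp only [List.map_cons, prodList, Pi.single_eq_of_ne (ne_of_mem_of_not_mem ha hbl).symm,
        pow]
      exact (CKA.one_mul _).trans (ih ha hl)

section Fintype

variable [Fintype α]

theorem cka_exprVec_zero : CKA (exprVec (0 : α → ℕ)) CRE.one :=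
  cka_prodList_map_one fun _ _ => CKA.refl CRE.one

theorem cka_exprVec_add (u v : α → ℕ) :
    CKA (exprVec (u + v)) ((exprVec u).mul (exprVec v)) :=
  (cka_prodList_map_congr fun a _ => cka_pow_add (CRE.letter a) (u a) (v a)).trans
    (cka_prodList_map_mul _ _ _)

variable [DecidableEq α]

theorem cka_exprVec_single (a : α) : CKA (exprVec (Pi.single a 1)) (CRE.letter a) :=
  cka_prodList_map_pow_single (by simp) (Finset.nodup_toList _)

theorem exprVec_leq_of_mem_sem : ∀ {f : CRE α} {u : α → ℕ}, u ∈ sem f → leq (exprVec u) f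
  | .zero, _, hu => hu.elim
  | .one, u, hu => by
    obtain rfl : u = 0 := hu
    exact leq_of_cka cka_exprVec_zero
  | .letter a, u, hu => by
    obtain rfl : u = Pi.single a 1 := hu
    exact leq_of_cka (cka_exprVec_single a)
  | .mul _ _, _, ⟨v, hv, w, hw, rfl⟩ =>
    leq_trans (leq_of_cka (cka_exprVec_add v w))
      (mul_leq_mul (exprVec_leq_of_mem_sem hv) (exprVec_leq_of_mem_sem hw))
  | .union f g, _, .inl hu => leq_trans (exprVec_leq_of_mem_sem hu) (leq_union_left f g)
  | .union f g, _, .inr hu => leq_trans (exprVec_leq_of_mem_sem hu) (leq_union_right f g)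
  | .star f, _, hu => by
    induction hu using AddSubmonoid.closure_induction with
    | mem v hv => exact leq_trans (exprVec_leq_of_mem_sem hv) (leq_star f)
    | zero => exact leq_trans (leq_of_cka cka_exprVec_zero) (one_leq_star f)
    | add v w _ _ hv hw =>
      exact leq_trans (leq_of_cka (cka_exprVec_add v w))
        (leq_trans (mul_leq_mul hv hw) (star_mul_star_leq f))

theorem NoStar.exists_leq_unionList_exprVec {e : CRE α} (he : NoStar e) :
    ∃ L : List (α → ℕ), (∀ u ∈ L, u ∈ sem e) ∧ leq e (unionList (L.map exprVec)) := by
  induction e with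
  | zero => exact ⟨[], by simp, zero_leq _⟩
  | one =>
    exact ⟨[0], by simp [sem], leq_trans (leq_of_cka cka_exprVec_zero.symm)
      (leq_unionList (by simp))⟩
  | letter a =>
    exact ⟨[Pi.single a 1], by simp [sem], leq_trans (leq_of_cka (cka_exprVec_single a).symm)
      (leq_unionList (by simp))⟩
  | mul e f ihe ihf =>
    obtain ⟨L, hLe, heL⟩ := ihe he.1
    obtain ⟨M, hMf, hfM⟩ := ihf he.2
    refine ⟨L.flatMap fun v => M.map (v + ·), ?_, ?_⟩
    · simp only [List.mem_flatMap, List.mem_map]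
      rintro _ ⟨v, hv, w, hw, rfl⟩
      exact ⟨v, hLe v hv, w, hMf w hw, rfl⟩
    · refine leq_trans (mul_leq_mul heL hfM) (unionList_mul_unionList_leq fun x hx y hy => ?_)
      obtain ⟨v, hv, rfl⟩ := List.mem_map.1 hx
      obtain ⟨w, hw, rfl⟩ := List.mem_map.1 hy
      exact leq_trans (leq_of_cka (cka_exprVec_add v w).symm)
        (leq_unionList (List.mem_map_of_mem (List.mem_flatMap_of_mem hv (List.mem_map_of_mem hw))))
  | union e f ihe ihf =>
    obtain ⟨L, hLe, heL⟩ := ihe he.1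
    obtain ⟨M, hMf, hfM⟩ := ihf he.2
    refine ⟨L ++ M, fun u hu => ?_, union_leq ?_ ?_⟩
    · rcases List.mem_append.1 hu with hu | hu
      exacts [.inl (hLe u hu), .inr (hMf u hu)]
    · exact leq_trans heL (unionList_leq_unionList (by simp))
    · exact leq_trans hfM (unionList_leq_unionList (by simp))
  | star => exact he.elim

/-- If `e` is finitary (star-free) and `⟦e⟧ ⊆ ⟦f⟧`, then `e ≤ f` is derivable. -/
theorem fin_incl (e f : CRE α) (he : NoStar e) (h : sem e ⊆ sem f) :
    leq e f := by
  obtain ⟨L, hLe, heL⟩ := he.exists_leq_unionList_exprVec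
  refine leq_trans heL (unionList_leq fun x hx => ?_)
  obtain ⟨u, hu, rfl⟩ := List.mem_map.1 hx
  exact exprVec_leq_of_mem_sem (h (hLe u hu))

end Fintype

end CKAnote
end
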